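/- arXiv:2302.03229 — 2 statements merged into one kernel-verified Lean document; each statement's English description precedes it below -/
import Mathlib

section
/- Let ℓ be a fixed positive integer. (i) If ℓ ≥ 2, then for all sufficiently large n, ρ(S_{n,ℓ}^{++}) ≥ ρ(S_{n,ℓ}^{+}) ≥ (ℓ − 1 + √((ℓ−1)² + 4ℓ(n−ℓ)))/2 ≥ √(ℓn). (ii) If ℓ ≥ 1, then for all sufficiently large n, ρ(S_{n,ℓ}^{++}) ≤ √((ℓ + 1/(4ℓ))·n). -/
open SimpleGraph
open scoped Classical

/-- The largest real eigenvalue of the adjacency matrix of `G`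
(the spectral radius of a graph). -/
noncomputable def specRad {V : Type} [Fintype V] (G : SimpleGraph V) : ℝ :=
  sSup {μ : ℝ | ∃ x : V → ℝ, x ≠ 0 ∧ (G.adjMatrix ℝ).mulVec x = μ • x}

/-- `G` contains a (not necessarily induced) copy of `F` as a subgraph. -/
def ContainsCopy {α β : Type} (F : SimpleGraph α) (G : SimpleGraph β) : Prop :=
  ∃ f : α → β, Function.Injective f ∧ ∀ a b, F.Adj a b → G.Adj (f a) (f b)

/-- The Turán number `ex(n, F)`. -/
noncomputable def exNum {α : Type} (n : ℕ) (F : SimpleGraph α) : ℕ :=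
  sSup {m : ℕ | ∃ G : SimpleGraph (Fin n), ¬ ContainsCopy F G ∧ G.edgeSet.ncard = m}

/-- The spectral Turán number `spex(n, F)`. -/
noncomputable def spex {α : Type} (n : ℕ) (F : SimpleGraph α) : ℝ :=
  sSup {r : ℝ | ∃ G : SimpleGraph (Fin n), ¬ ContainsCopy F G ∧ specRad G = r}

/-- `t` vertex-disjoint copies of `F`. -/
def copies {α : Type} (t : ℕ) (F : SimpleGraph α) : SimpleGraph (Fin t × α) where
  Adj x y := x.1 = y.1 ∧ F.Adj x.2 y.2
  symm := ⟨fun _ _ h => ⟨h.1.symm, h.2.symm⟩⟩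
  loopless := ⟨fun x h => F.irrefl h.2⟩

/-- The join `G + H` of two graphs. -/
def joinG {α β : Type} (G : SimpleGraph α) (H : SimpleGraph β) : SimpleGraph (α ⊕ β) where
  Adj x y := match x, y with
    | Sum.inl a, Sum.inl b => G.Adj a b
    | Sum.inr a, Sum.inr b => H.Adj a b
    | Sum.inl _, Sum.inr _ => True
    | Sum.inr _, Sum.inl _ => True
  symm := by
    constructor
    rintro (a|a) (b|b) h
    · exact G.adj_symm h
    · trivial
    · trivial
    · exact H.adj_symm h
  loopless := by
    constructor
    rintro (a|a) h
    · exact G.irrefl h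
    · exact H.irrefl h

/-- `S_{n,ℓ}^{+}`: the join of `K_ℓ` with an independent set of `n - ℓ` vertices,
plus one edge inside the independent set. -/
def sPlus (n ℓ : ℕ) : SimpleGraph (Fin n) :=
  SimpleGraph.fromRel (fun i j => (i : ℕ) < ℓ ∨ ((i : ℕ) ≤ ℓ + 1 ∧ (j : ℕ) ≤ ℓ + 1))

/-- `S_{n,ℓ}^{++}`: the join of `K_ℓ` with an independent set of `n - ℓ` vertices,
plus a maximum matching inside the independent set. -/
def sPP (n ℓ : ℕ) : SimpleGraph (Fin n) :=
  SimpleGraph.fromRel (fun i j => (i : ℕ) < ℓ ∨ ((i : ℕ) - ℓ) / 2 = ((j : ℕ) - ℓ) / 2)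

/-- The number of edges inside a vertex subset `A`. -/
noncomputable def eIn {n : ℕ} (G : SimpleGraph (Fin n)) (A : Finset (Fin n)) : ℕ :=
  (G.induce (A : Set (Fin n))).edgeSet.ncard

/-- The number of edges between two disjoint vertex subsets `A` and `B`. -/
noncomputable def eCross {n : ℕ} (G : SimpleGraph (Fin n)) (A B : Finset (Fin n)) : ℕ :=
  Set.ncard {p : Fin n × Fin n | p.1 ∈ A ∧ p.2 ∈ B ∧ G.Adj p.1 p.2}

/-!
Every vertex of the `K_ℓ` part is universal in both graphs, so the adjacency matrix maps a vector
that is constant on the clique and on its complement to one whose entries are read off from the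
class sizes. For `S⁺` the vector equal to `μ` on the clique and to `ℓ` elsewhere, where `μ` is the
positive root of `μ² = (ℓ - 1) μ + ℓ (n - ℓ)`, satisfies `μ x ≤ A x`, hence `μ ≤ ρ(S⁺)`; and
`S⁺ ⊆ S⁺⁺` gives `ρ(S⁺) ≤ ρ(S⁺⁺)`. For `S⁺⁺` the Schur test with the weight `(c - 1) / ℓ` on the
clique and `1` elsewhere gives `ρ(S⁺⁺) ≤ c` as soon as `ℓ (n - ℓ) ≤ (c - 1) (c - ℓ + 1)`, which
holds for `c = √((ℓ + 1/(4ℓ)) n)` when `n ≥ 20 ℓ⁵`.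
-/

open Finset Matrix

section Matrix

variable {V : Type} [Fintype V]

theorem Matrix.setOf_eigenvalue_eq_spectrum (A : Matrix V V ℝ) :
    {μ : ℝ | ∃ x : V → ℝ, x ≠ 0 ∧ A *ᵥ x = μ • x} = spectrum ℝ A := by
  ext μ
  rw [Set.mem_ofPred_eq, ← spectrum_toLin', ← Module.End.hasEigenvalue_iff_mem_spectrum]
  constructor
  · rintro ⟨x, hx, h⟩
    exact Module.End.hasEigenvalue_of_hasEigenvector ⟨Module.End.mem_eigenspace_iff.mpr h, hx⟩
  · intro h
    obtain ⟨x, hx⟩ := h.exists_hasEigenvector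
    exact ⟨x, hx.2, Module.End.mem_eigenspace_iff.mp hx.1⟩

open scoped MatrixOrder in
theorem Matrix.IsHermitian.dotProduct_mulVec_le {A : Matrix V V ℝ} (hA : A.IsHermitian) {r : ℝ}
    (hr : ∀ μ ∈ spectrum ℝ A, μ ≤ r) (x : V → ℝ) : x ⬝ᵥ (A *ᵥ x) ≤ r * (x ⬝ᵥ x) := by
  have h := (le_iff.mp (le_algebraMap_of_spectrum_le hr hA.isSelfAdjoint)).dotProduct_mulVec_nonneg
    x
  rw [sub_mulVec, dotProduct_sub, Algebra.algebraMap_eq_smul_one, smul_mulVec, one_mulVec,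
    dotProduct_smul, star_trivial, smul_eq_mul] at h
  linarith

theorem Matrix.dotProduct_mulVec_eq_sum (A : Matrix V V ℝ) (x y : V → ℝ) :
    x ⬝ᵥ (A *ᵥ y) = ∑ i, ∑ j, x i * A i j * y j := by
  simp only [dotProduct, mulVec, mul_sum, mul_assoc]

-- The Schur test: `2 xᵢ xⱼ ≤ (wⱼ / wᵢ) xᵢ² + (wᵢ / wⱼ) xⱼ²`, summed against `A`.
theorem Matrix.IsSymm.dotProduct_mulVec_le_of_mulVec_le {A : Matrix V V ℝ} (hA : A.IsSymm)
    (hA₀ : ∀ i j, 0 ≤ A i j) {w : V → ℝ} (hw : ∀ i, 0 < w i) {c : ℝ} (h : A *ᵥ w ≤ c • w)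
    (x : V → ℝ) : x ⬝ᵥ (A *ᵥ x) ≤ c * (x ⬝ᵥ x) := by
  set q : V → ℝ := fun i => x i ^ 2 / w i
  have hq : 0 ≤ q := fun i => div_nonneg (sq_nonneg _) (hw i).le
  have amgm : ∀ i j, x i * A i j * x j ≤ (A i j * (q i * w j) + A j i * (q j * w i)) / 2 := by
    intro i j
    have hi := hw i
    have hj := hw j
    have hsq : q i * w j + q j * w i - 2 * (x i * x j) =
        (x i * w j - x j * w i) ^ 2 / (w i * w j) := by
      simp only [q]; field_simp; ring
    have : 0 ≤ A i j * (q i * w j + q j * w i - 2 * (x i * x j)) :=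
      mul_nonneg (hA₀ i j) (hsq ▸ by positivity)
    rw [hA.apply i j]
    linarith
  calc x ⬝ᵥ (A *ᵥ x) = ∑ i, ∑ j, x i * A i j * x j := dotProduct_mulVec_eq_sum A x x
    _ ≤ ∑ i, ∑ j, (A i j * (q i * w j) + A j i * (q j * w i)) / 2 :=
        sum_le_sum fun i _ => sum_le_sum fun j _ => amgm i j
    _ = q ⬝ᵥ (A *ᵥ w) := by
        rw [dotProduct_mulVec_eq_sum]
        simp only [add_div, sum_add_distrib]
        rw [sum_comm (f := fun i j => A j i * (q j * w i) / 2), ← sum_add_distrib]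
        refine sum_congr rfl fun i _ => ?_
        rw [← sum_add_distrib]
        refine sum_congr rfl fun j _ => ?_
        ring
    _ ≤ q ⬝ᵥ (c • w) := dotProduct_le_dotProduct_of_nonneg_left h hq
    _ = c * (x ⬝ᵥ x) := by
        simp only [dotProduct, q, Pi.smul_apply, smul_eq_mul, mul_sum]
        refine sum_congr rfl fun i _ => ?_
        have := (hw i).ne'
        field_simp

end Matrix

section SpectralRadius

variable {V : Type} [Fintype V]

theorem specRad_eq_sSup_spectrum (G : SimpleGraph V) :
    specRad G = sSup (spectrum ℝ (G.adjMatrix ℝ)) :=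
  congrArg sSup (Matrix.setOf_eigenvalue_eq_spectrum _)

theorem dotProduct_mulVec_le_specRad_mul (G : SimpleGraph V) (x : V → ℝ) :
    x ⬝ᵥ (G.adjMatrix ℝ *ᵥ x) ≤ specRad G * (x ⬝ᵥ x) :=
  (G.isHermitian_adjMatrix ℝ).dotProduct_mulVec_le
    (fun _ hμ => specRad_eq_sSup_spectrum G ▸ le_csSup (finite_spectrum _).bddAbove hμ) x

theorem specRad_nonneg (G : SimpleGraph V) : 0 ≤ specRad G := by
  rcases isEmpty_or_nonempty V with hV | ⟨⟨v⟩⟩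
  · simp [specRad, Subsingleton.elim _ (0 : V → ℝ)]
  · simpa using dotProduct_mulVec_le_specRad_mul G (Pi.single v 1)

theorem le_specRad_of_smul_le_mulVec {G : SimpleGraph V} {x : V → ℝ} (hx₀ : 0 ≤ x) (hx : x ≠ 0)
    {μ : ℝ} (h : μ • x ≤ G.adjMatrix ℝ *ᵥ x) : μ ≤ specRad G := by
  have hpos : 0 < x ⬝ᵥ x := by simpa using dotProduct_star_self_pos_iff.mpr hx
  refine le_of_mul_le_mul_right ?_ hpos
  calc μ * (x ⬝ᵥ x) = x ⬝ᵥ (μ • x) := by rw [dotProduct_smul, smul_eq_mul]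
    _ ≤ x ⬝ᵥ (G.adjMatrix ℝ *ᵥ x) := dotProduct_le_dotProduct_of_nonneg_left h hx₀
    _ ≤ specRad G * (x ⬝ᵥ x) := dotProduct_mulVec_le_specRad_mul G x

theorem specRad_le_of_dotProduct_mulVec_le {G : SimpleGraph V} {c : ℝ} (hc : 0 ≤ c)
    (h : ∀ x, x ⬝ᵥ (G.adjMatrix ℝ *ᵥ x) ≤ c * (x ⬝ᵥ x)) : specRad G ≤ c := by
  refine Real.sSup_le ?_ hc
  rintro μ ⟨x, hx, hμ⟩
  have hpos : 0 < x ⬝ᵥ x := by simpa using dotProduct_star_self_pos_iff.mpr hx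
  refine le_of_mul_le_mul_right ?_ hpos
  simpa [hμ, dotProduct_smul] using h x

theorem specRad_mono {G H : SimpleGraph V} (h : G ≤ H) : specRad G ≤ specRad H := by
  refine specRad_le_of_dotProduct_mulVec_le (specRad_nonneg H) fun x => ?_
  calc x ⬝ᵥ (G.adjMatrix ℝ *ᵥ x) ≤ |x| ⬝ᵥ (H.adjMatrix ℝ *ᵥ |x|) := by
        simp only [dotProduct_mulVec_eq_sum, adjMatrix_apply, Pi.abs_apply]
        refine sum_le_sum fun i _ => sum_le_sum fun j _ => ?_
        by_cases hG : G.Adj i j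
        · simpa [hG, h hG, abs_mul] using le_abs_self (x i * x j)
        · simp only [hG, if_false, mul_zero, zero_mul]
          positivity
    _ ≤ specRad H * (|x| ⬝ᵥ |x|) := dotProduct_mulVec_le_specRad_mul H |x|
    _ = specRad H * (x ⬝ᵥ x) := by simp [dotProduct, abs_mul_abs_self]

theorem specRad_le_of_mulVec_le {G : SimpleGraph V} {w : V → ℝ} (hw : ∀ i, 0 < w i) {c : ℝ}
    (hc : 0 ≤ c) (h : G.adjMatrix ℝ *ᵥ w ≤ c • w) : specRad G ≤ c :=
  specRad_le_of_dotProduct_mulVec_le hc <|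
    G.isSymm_adjMatrix.dotProduct_mulVec_le_of_mulVec_le
      (fun i j => by rw [adjMatrix_apply]; split_ifs <;> norm_num) hw h

end SpectralRadius

section Universal

variable {V : Type} [Fintype V] [DecidableEq V] {G : SimpleGraph V} {C : Finset V}

theorem adjMatrix_mulVec_ite_apply (G : SimpleGraph V) (C : Finset V) (a b : ℝ) (v : V) :
    (G.adjMatrix ℝ *ᵥ fun u => if u ∈ C then a else b) v =
      #(G.neighborFinset v ∩ C) * a + #(G.neighborFinset v \ C) * b := by
  rw [adjMatrix_mulVec_apply, sum_ite, sum_const, sum_const, nsmul_eq_mul,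
    nsmul_eq_mul, filter_mem_eq_inter, filter_notMem_eq_sdiff]

theorem adjMatrix_mulVec_ite_apply_of_mem (hC : ∀ u ∈ C, G.IsUniversal u) {v : V} (hv : v ∈ C)
    (a b : ℝ) :
    (G.adjMatrix ℝ *ᵥ fun u => if u ∈ C then a else b) v = (#C - 1 : ℕ) * a + #Cᶜ * b := by
  have hN : G.neighborFinset v = univ.erase v := (G.neighborFinset_eq_erase_univ v).mpr (hC v hv)
  have hinter : G.neighborFinset v ∩ C = C.erase v := by ext; simp [hN]
  have hsdiff : G.neighborFinset v \ C = Cᶜ := by ext u; simp [hN]; grind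
  rw [adjMatrix_mulVec_ite_apply, hinter, hsdiff, card_erase_of_mem hv]

theorem adjMatrix_mulVec_ite_apply_of_notMem (hC : ∀ u ∈ C, G.IsUniversal u) {v : V}
    (hv : v ∉ C) (a b : ℝ) :
    (G.adjMatrix ℝ *ᵥ fun u => if u ∈ C then a else b) v =
      #C * a + #(G.neighborFinset v \ C) * b := by
  have hinter : G.neighborFinset v ∩ C = C :=
    inter_eq_right.mpr fun u hu => (mem_neighborFinset _ _ _).mpr
      (hC u hu (ne_of_mem_of_not_mem hu hv)).symm
  rw [adjMatrix_mulVec_ite_apply, hinter]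

end Universal

section SGraphs

variable {n l : ℕ}

def cliqueVerts (n l : ℕ) : Finset (Fin n) := {i | (i : ℕ) < l}

theorem card_cliqueVerts (h : l ≤ n) : #(cliqueVerts n l) = l := by
  simp [cliqueVerts, Fin.card_filter_val_lt, h]

theorem card_compl_cliqueVerts (h : l ≤ n) : #(cliqueVerts n l)ᶜ = n - l := by
  rw [card_compl, Fintype.card_fin, card_cliqueVerts h]

theorem isUniversal_sPlus : ∀ v ∈ cliqueVerts n l, (sPlus n l).IsUniversal v := by
  intro v hv w hvw
  simp only [cliqueVerts, mem_filter, mem_univ, true_and] at hv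
  simp [sPlus, hvw, hv]

theorem isUniversal_sPP : ∀ v ∈ cliqueVerts n l, (sPP n l).IsUniversal v := by
  intro v hv w hvw
  simp only [cliqueVerts, mem_filter, mem_univ, true_and] at hv
  simp [sPP, hvw, hv]

theorem sPlus_le_sPP : sPlus n l ≤ sPP n l := by
  intro i j h
  simp only [sPlus, sPP, fromRel_adj, ne_eq] at h ⊢
  have : (i : ℕ) ≠ j := Fin.val_ne_of_ne h.1
  omega

theorem card_neighborFinset_sPP_sdiff_le_one {v : Fin n} (hv : v ∉ cliqueVerts n l) :
    #((sPP n l).neighborFinset v \ cliqueVerts n l) ≤ 1 := by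
  refine card_le_one.mpr fun a ha b hb => Fin.ext ?_
  simp only [mem_sdiff, mem_neighborFinset, cliqueVerts, mem_filter, mem_univ, true_and] at hv ha hb
  simp only [sPP, fromRel_adj] at ha hb
  have := Fin.val_ne_of_ne ha.1.1
  have := Fin.val_ne_of_ne hb.1.1
  omega

end SGraphs

section Bounds

variable {n l : ℕ}

/-- The spectral radius of `S_{n,ℓ}`: the positive root of `μ² = (ℓ - 1) μ + ℓ (n - ℓ)`. -/
noncomputable def splitRadius (n l : ℕ) : ℝ :=
  ((l : ℝ) - 1 + √(((l : ℝ) - 1) ^ 2 + 4 * l * ((n : ℝ) - l))) / 2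

theorem splitRadius_nonneg (h : l ≤ n) : 0 ≤ splitRadius n l := by
  have hln : (l : ℝ) ≤ n := by exact_mod_cast h
  have := Real.abs_le_sqrt (show ((l : ℝ) - 1) ^ 2 ≤ ((l : ℝ) - 1) ^ 2 + 4 * l * ((n : ℝ) - l) by
    nlinarith)
  have := neg_abs_le ((l : ℝ) - 1)
  unfold splitRadius
  linarith

theorem splitRadius_sq (h : l ≤ n) :
    splitRadius n l ^ 2 = ((l : ℝ) - 1) * splitRadius n l + l * ((n : ℝ) - l) := by
  have hln : (l : ℝ) ≤ n := by exact_mod_cast h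
  have hs := Real.sq_sqrt (show 0 ≤ ((l : ℝ) - 1) ^ 2 + 4 * l * ((n : ℝ) - l) by positivity)
  unfold splitRadius
  linear_combination hs / 4

theorem sqrt_mul_le_splitRadius (hl : 2 ≤ l) (hn : 4 * l ≤ n) :
    √((l : ℝ) * n) ≤ splitRadius n l := by
  have hlR : (2 : ℝ) ≤ l := by exact_mod_cast hl
  have hnR : 4 * (l : ℝ) ≤ n := by exact_mod_cast hn
  set t := √((l : ℝ) * n)
  have ht : t ^ 2 = l * n := Real.sq_sqrt (by positivity)
  have ht2 : 2 * (l : ℝ) ≤ t := Real.le_sqrt_of_sq_le (by nlinarith)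
  have := Real.abs_le_sqrt
    (show (2 * t - (l - 1)) ^ 2 ≤ ((l : ℝ) - 1) ^ 2 + 4 * l * ((n : ℝ) - l) by nlinarith)
  have := le_abs_self (2 * t - (l - 1))
  unfold splitRadius
  linarith

theorem le_specRad_sPlus (hl : 0 < l) (hln : l < n) : splitRadius n l ≤ specRad (sPlus n l) := by
  set μ := splitRadius n l
  have hμ : 0 ≤ μ := splitRadius_nonneg hln.le
  have hμ2 := splitRadius_sq hln.le
  refine le_specRad_of_smul_le_mulVec (x := fun u => if u ∈ cliqueVerts n l then μ else l)
    (fun u => by simp only [Pi.zero_apply]; split_ifs <;> positivity) (fun h0 => ?_) fun v => ?_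
  · have := congrFun h0 ⟨l, hln⟩
    simp [cliqueVerts] at this
    omega
  by_cases hv : v ∈ cliqueVerts n l
  · rw [Pi.smul_apply, adjMatrix_mulVec_ite_apply_of_mem isUniversal_sPlus hv, if_pos hv,
      card_cliqueVerts hln.le, card_compl_cliqueVerts hln.le, smul_eq_mul]
    push_cast [Nat.cast_sub hl, Nat.cast_sub hln.le]
    nlinarith
  · rw [Pi.smul_apply, adjMatrix_mulVec_ite_apply_of_notMem isUniversal_sPlus hv, if_neg hv,
      card_cliqueVerts hln.le, smul_eq_mul]
    have : (0 : ℝ) ≤ #((sPlus n l).neighborFinset v \ cliqueVerts n l) * l := by positivity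
    linarith

theorem specRad_sPP_le (hl : 0 < l) (hln : l ≤ n) {c : ℝ} (hc : 1 < c)
    (h : l * ((n : ℝ) - l) ≤ (c - 1) * (c - l + 1)) : specRad (sPP n l) ≤ c := by
  have hlR : (0 : ℝ) < l := by exact_mod_cast hl
  set α := (c - 1) / l
  have hαl : l * α = c - 1 := mul_div_cancel₀ _ hlR.ne'
  refine specRad_le_of_mulVec_le (w := fun u => if u ∈ cliqueVerts n l then α else 1)
    (fun u => by split_ifs <;> positivity) (by linarith) fun v => ?_
  by_cases hv : v ∈ cliqueVerts n l
  · rw [Pi.smul_apply, adjMatrix_mulVec_ite_apply_of_mem isUniversal_sPP hv, if_pos hv,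
      card_cliqueVerts hln, card_compl_cliqueVerts hln, smul_eq_mul]
    push_cast [Nat.cast_sub hl, Nat.cast_sub hln]
    nlinarith
  · rw [Pi.smul_apply, adjMatrix_mulVec_ite_apply_of_notMem isUniversal_sPP hv, if_neg hv,
      card_cliqueVerts hln, smul_eq_mul]
    have : (#((sPP n l).neighborFinset v \ cliqueVerts n l) : ℝ) ≤ 1 := by
      exact_mod_cast card_neighborFinset_sPP_sdiff_le_one hv
    linarith

theorem specRad_sPP_le_sqrt (hl : 0 < l) (hn : 20 * l ^ 5 ≤ n) :
    specRad (sPP n l) ≤ √(((l : ℝ) + 1 / (4 * l)) * n) := by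
  have hlR : (1 : ℝ) ≤ l := by exact_mod_cast hl
  have hnR : 20 * (l : ℝ) ^ 5 ≤ n := by exact_mod_cast hn
  have hl35 : (l : ℝ) ^ 3 ≤ (l : ℝ) ^ 5 := pow_le_pow_right₀ hlR (by norm_num)
  set c := √(((l : ℝ) + 1 / (4 * l)) * n)
  have hc : 0 ≤ c := Real.sqrt_nonneg _
  have hc2 : c ^ 2 = l * n + n / (4 * l) := by
    rw [Real.sq_sqrt (by positivity)]
    ring
  have hcsq : (4 * l ^ 2 * c) ^ 2 = (16 * (l : ℝ) ^ 5 + 4 * l ^ 3) * n := by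
    rw [mul_pow, hc2]
    field_simp
    ring
  have hlc : l * c ≤ n / (4 * l) := by
    rw [le_div_iff₀ (by positivity)]
    refine le_of_pow_le_pow_left₀ two_ne_zero (by positivity) ?_
    nlinarith
  have hc1 : 1 < c := by nlinarith
  refine specRad_sPP_le hl ?_ hc1 (by nlinarith)
  exact_mod_cast (show (l : ℝ) ≤ n by nlinarith)

end Bounds

theorem spectral_radius_of_S_graphs (l : ℕ) (hl : 1 ≤ l) :
    (2 ≤ l → ∃ n₀ : ℕ, ∀ n : ℕ, n₀ ≤ n →
      specRad (sPlus n l) ≤ specRad (sPP n l) ∧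
      ((l : ℝ) - 1 + Real.sqrt (((l : ℝ) - 1)^2 + 4*l*((n : ℝ) - l)))/2 ≤ specRad (sPlus n l) ∧
      Real.sqrt ((l : ℝ) * n) ≤
        ((l : ℝ) - 1 + Real.sqrt (((l : ℝ) - 1)^2 + 4*l*((n : ℝ) - l)))/2) ∧
    (∃ n₀ : ℕ, ∀ n : ℕ, n₀ ≤ n →
      specRad (sPP n l) ≤ Real.sqrt (((l : ℝ) + 1/(4*l)) * n)) :=
  ⟨fun hl2 => ⟨4 * l, fun _ hn =>
      ⟨specRad_mono sPlus_le_sPP, le_specRad_sPlus hl (by omega), sqrt_mul_le_splitRadius hl2 hn⟩⟩,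
    ⟨20 * l ^ 5, fun _ hn => specRad_sPP_le_sqrt hl hn⟩⟩
end

section
/- Let n ≥ 2 and let H be a graph on n−1 vertices. Then ρ(H) ≥ ρ(K₁ + H) − (n−1)/ρ(K₁ + H). -/
open SimpleGraph
open scoped Classical

/-!
Let `x = (s, y)` be an eigenvector of `K₁ + H` for `ρ = ρ(K₁ + H)`, with `s` its value at the apex.
The apex row of the eigenvalue equation gives `∑ y = ρ s`, the other rows give `s 𝟙 + A_H y = ρ y`.
Hence `yᵀ A_H y = ρ ‖y‖² - ρ s²`, while Cauchy–Schwarz gives `ρ² s² = (∑ y)² ≤ (n - 1) ‖y‖²`,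
so `yᵀ A_H y ≥ (ρ - (n - 1) / ρ) ‖y‖²`. The Rayleigh bound `yᵀ A_H y ≤ ρ(H) ‖y‖²` concludes,
as `y ≠ 0` and `ρ > 0` (`K₁ + H` has an edge).
-/

open Matrix

namespace Matrix

variable {V : Type} [Fintype V] [DecidableEq V]

theorem setOf_exists_mulVec_eq_smul_eq_spectrum (A : Matrix V V ℝ) :
    {μ : ℝ | ∃ x : V → ℝ, x ≠ 0 ∧ A *ᵥ x = μ • x} = spectrum ℝ A := by
  ext μ
  rw [Set.mem_ofPred_eq, ← spectrum_toLin', ← Module.End.hasEigenvalue_iff_mem_spectrum]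
  constructor
  · rintro ⟨x, hx, h⟩
    exact Module.End.hasEigenvalue_of_hasEigenvector
      (Module.End.hasEigenvector_iff.mpr ⟨by simpa using h, hx⟩)
  · intro h
    obtain ⟨x, hx⟩ := h.exists_hasEigenvector
    exact ⟨x, hx.2, by simpa using hx.apply_eq_smul⟩

theorem IsHermitian.sSup_spectrum_mem [Nonempty V] {A : Matrix V V ℝ} (hA : A.IsHermitian) :
    sSup (spectrum ℝ A) ∈ spectrum ℝ A := by
  rw [hA.spectrum_real_eq_range_eigenvalues]
  exact (Set.range_nonempty _).csSup_mem (Set.finite_range _)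

theorem IsHermitian.dotProduct_mulVec_le_sSup_spectrum {A : Matrix V V ℝ} (hA : A.IsHermitian)
    (x : V → ℝ) : x ⬝ᵥ A *ᵥ x ≤ sSup (spectrum ℝ A) * (x ⬝ᵥ x) := by
  set c := sSup (spectrum ℝ A)
  have hB : (algebraMap ℝ _ c - A).PosSemidef := by
    refine posSemidef_iff_isHermitian_and_spectrum_nonneg.mpr ⟨?_, ?_⟩
    · exact (isHermitian_diagonal_of_self_adjoint _ (by simp [IsSelfAdjoint])).sub hA
    · rw [← spectrum.singleton_sub_eq]
      rintro _ ⟨_, rfl, a, ha, rfl⟩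
      exact sub_nonneg.mpr (le_csSup A.finite_real_spectrum.bddAbove ha)
  have := hB.dotProduct_mulVec_nonneg x
  rwa [star_trivial, sub_mulVec, dotProduct_sub, Algebra.algebraMap_eq_smul_one, smul_mulVec,
    one_mulVec, dotProduct_smul, smul_eq_mul, sub_nonneg] at this

theorem mul_dotProduct_self_le_of_sum_eq_of_add_mulVec_eq {W : Type} [Fintype W]
    (A : Matrix W W ℝ) {ρ s : ℝ} {y : W → ℝ} (hρ : 0 < ρ) (hsum : ∑ w, y w = ρ * s)
    (hy : ∀ w, s + (A *ᵥ y) w = ρ * y w) :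
    (ρ - Fintype.card W / ρ) * (y ⬝ᵥ y) ≤ y ⬝ᵥ A *ᵥ y := by
  have hquad : y ⬝ᵥ A *ᵥ y = ρ * (y ⬝ᵥ y) - ρ * s ^ 2 := by
    calc y ⬝ᵥ A *ᵥ y = ∑ w, (ρ * (y w * y w) - s * y w) := by
          refine Finset.sum_congr rfl fun w _ => ?_
          rw [show (A *ᵥ y) w = ρ * y w - s by linarith [hy w]]
          ring
      _ = ρ * (y ⬝ᵥ y) - ρ * s ^ 2 := by
          rw [Finset.sum_sub_distrib, ← Finset.mul_sum, ← Finset.mul_sum, hsum]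
          simp only [dotProduct]
          ring
  have hCS : (ρ * s) ^ 2 ≤ Fintype.card W * (y ⬝ᵥ y) := by
    rw [← hsum]
    simpa [dotProduct, sq] using sq_sum_le_card_mul_sum_sq (s := Finset.univ) (f := y)
  have hs : ρ * s ^ 2 ≤ Fintype.card W * (y ⬝ᵥ y) / ρ := by
    rw [le_div_iff₀ hρ]
    linarith [show (ρ * s) ^ 2 = ρ * s ^ 2 * ρ by ring]
  rw [hquad, sub_mul, div_mul_eq_mul_div]
  linarith

end Matrix

namespace SimpleGraph

variable {V : Type} [Fintype V]

theorem specRad_eq_sSup_spectrum [DecidableEq V] (G : SimpleGraph V) :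
    specRad G = sSup (spectrum ℝ (G.adjMatrix ℝ)) := by
  rw [specRad, setOf_exists_mulVec_eq_smul_eq_spectrum]

theorem exists_adjMatrix_mulVec_eq_specRad_smul [Nonempty V] (G : SimpleGraph V) :
    ∃ x : V → ℝ, x ≠ 0 ∧ G.adjMatrix ℝ *ᵥ x = specRad G • x := by
  have h := (G.isHermitian_adjMatrix ℝ).sSup_spectrum_mem
  rwa [← specRad_eq_sSup_spectrum, ← setOf_exists_mulVec_eq_smul_eq_spectrum] at h

theorem dotProduct_adjMatrix_mulVec_le (G : SimpleGraph V) (x : V → ℝ) :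
    x ⬝ᵥ G.adjMatrix ℝ *ᵥ x ≤ specRad G * (x ⬝ᵥ x) := by
  rw [specRad_eq_sSup_spectrum]
  exact (G.isHermitian_adjMatrix ℝ).dotProduct_mulVec_le_sSup_spectrum x

theorem one_le_specRad_of_adj {G : SimpleGraph V} {u v : V} (huv : G.Adj u v) :
    1 ≤ specRad G := by
  set z : V → ℝ := Pi.single u 1 + Pi.single v 1
  have hzz : z ⬝ᵥ z = 2 := by
    simp [z, dotProduct_add, huv.ne, huv.ne.symm]
    norm_num
  have hzAz : z ⬝ᵥ G.adjMatrix ℝ *ᵥ z = 2 := by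
    simp [z, mulVec_add, add_dotProduct, dotProduct_add, huv, huv.symm]
    norm_num
  have := G.dotProduct_adjMatrix_mulVec_le z
  rw [hzz, hzAz] at this
  linarith

end SimpleGraph

section Join

variable {α β : Type} (G : SimpleGraph α) (H : SimpleGraph β)

@[simp] theorem joinG_adj_inl_inl {a a' : α} : (joinG G H).Adj (Sum.inl a) (Sum.inl a') ↔ G.Adj a a' :=
  Iff.rfl

@[simp] theorem joinG_adj_inr_inr {b b' : β} : (joinG G H).Adj (Sum.inr b) (Sum.inr b') ↔ H.Adj b b' :=
  Iff.rfl

@[simp] theorem joinG_adj_inl_inr (a : α) (b : β) : (joinG G H).Adj (Sum.inl a) (Sum.inr b) :=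
  trivial

@[simp] theorem joinG_adj_inr_inl (b : β) (a : α) : (joinG G H).Adj (Sum.inr b) (Sum.inl a) :=
  trivial

variable [Fintype α] [Fintype β]

theorem joinG_adjMatrix_mulVec_inl (x : α ⊕ β → ℝ) (a : α) :
    ((joinG G H).adjMatrix ℝ *ᵥ x) (Sum.inl a) =
      (G.adjMatrix ℝ *ᵥ (x ∘ Sum.inl)) a + ∑ b, x (Sum.inr b) := by
  simp [mulVec, dotProduct, Fintype.sum_sum_type, adjMatrix_apply]

theorem joinG_adjMatrix_mulVec_inr (x : α ⊕ β → ℝ) (b : β) :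
    ((joinG G H).adjMatrix ℝ *ᵥ x) (Sum.inr b) =
      ∑ a, x (Sum.inl a) + (H.adjMatrix ℝ *ᵥ (x ∘ Sum.inr)) b := by
  simp [mulVec, dotProduct, Fintype.sum_sum_type, adjMatrix_apply]

end Join

theorem specRad_join_sub_card_div_le {W : Type} [Fintype W] [Nonempty W] (H : SimpleGraph W) :
    specRad (joinG (⊤ : SimpleGraph (Fin 1)) H) -
      Fintype.card W / specRad (joinG (⊤ : SimpleGraph (Fin 1)) H) ≤ specRad H := by
  set ρ := specRad (joinG (⊤ : SimpleGraph (Fin 1)) H)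
  obtain ⟨x, hx0, hx⟩ := (joinG (⊤ : SimpleGraph (Fin 1)) H).exists_adjMatrix_mulVec_eq_specRad_smul
  set s := x (Sum.inl 0)
  set y := x ∘ Sum.inr
  have hsum : ∑ w, y w = ρ * s := by
    have h := congrFun hx (Sum.inl 0)
    rw [joinG_adjMatrix_mulVec_inl] at h
    simp only [adjMatrix_mulVec_apply, IsIsolated.of_subsingleton,
      IsIsolated.neighborFinset_eq_empty, Finset.sum_empty, zero_add] at h
    exact h
  have hy : ∀ w, s + (H.adjMatrix ℝ *ᵥ y) w = ρ * y w := fun w => by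
    have h := congrFun hx (Sum.inr w)
    rwa [joinG_adjMatrix_mulVec_inr, Fin.sum_univ_one] at h
  have hρ : 0 < ρ := zero_lt_one.trans_le <|
    SimpleGraph.one_le_specRad_of_adj (joinG_adj_inl_inr ⊤ H 0 (Classical.arbitrary W))
  have hy0 : y ≠ 0 := by
    intro h
    have hs : s = 0 := by simpa [h] using hy (Classical.arbitrary W)
    refine hx0 (funext ?_)
    rintro (a | w)
    · rwa [Subsingleton.elim a 0]
    · exact congrFun h w
  have hq : 0 < y ⬝ᵥ y := dotProduct_self_star_pos_iff.mpr hy0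
  refine le_of_mul_le_mul_right ?_ hq
  exact (mul_dotProduct_self_le_of_sum_eq_of_add_mulVec_eq _ hρ hsum hy).trans
    (H.dotProduct_adjMatrix_mulVec_le y)

theorem spectral_radius_vertex_deletion (n : ℕ) (hn : 2 ≤ n) (H : SimpleGraph (Fin (n-1))) :
    specRad (joinG (⊤ : SimpleGraph (Fin 1)) H) -
      ((n : ℝ) - 1) / specRad (joinG (⊤ : SimpleGraph (Fin 1)) H) ≤ specRad H := by
  have : Nonempty (Fin (n - 1)) := ⟨⟨0, by omega⟩⟩
  have hcard : (n : ℝ) - 1 = Fintype.card (Fin (n - 1)) := by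
    rw [Fintype.card_fin, Nat.cast_sub (by omega), Nat.cast_one]
  rw [hcard]
  exact specRad_join_sub_card_div_le H
end
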